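/- For every ε > 0 and every δ with 0 < δ ≤ 1, the probability that a uniformly random tournament T on n labeled vertices has the property that every subset A of its vertices with |A| ≥ δ·n contains at least (1/4 − ε)·C(|A|,3) cyclic triples of T, tends to 1 as n tends to infinity. In other words, for every δ > 0 the δ-linear density of the 3-uniform hypergraph of cyclic triples of a random tournament tends to 1/4 with high probability. -/

import Mathlib

open scoped Classical
open Filter

/-- `T` is a tournament on `Fin n`: each pair of distinct vertices gets
exactly one of the two arcs. -/
def IsTournament {n : ℕ} (T : Fin n → Fin n → Bool) : Prop :=
  (∀ i, T i i = false) ∧ ∀ i j : Fin n, i ≠ j → T i j = !T j i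

/-- `s` is a cyclic triple of the tournament `T`: `s = {a,b,c}` for three
distinct vertices whose three arcs form a directed 3-cycle. -/
def IsCyclicTriple {n : ℕ} (T : Fin n → Fin n → Bool) (s : Finset (Fin n)) : Prop :=
  ∃ a b c : Fin n, a ≠ b ∧ a ≠ c ∧ b ≠ c ∧ s = {a, b, c} ∧
    ((T a b = true ∧ T b c = true ∧ T c a = true) ∨
     (T b a = true ∧ T c b = true ∧ T a c = true))

set_option maxHeartbeats 1000000

namespace RTaux
variable {n : ℕ}

noncomputable def sgn (T : Fin n → Fin n → Bool) (a b : Fin n) : ℝ :=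
  (if T a b then 1 else 0) - (if T b a then 1 else 0)

noncomputable def tt (T : Fin n → Fin n → Bool) (a b : Fin n) : ℝ :=
  if T a b then 1 else 0

noncomputable def ee (a b : Fin n) : ℝ := if a = b then 0 else 1

lemma sgn_diag (T : Fin n → Fin n → Bool) (a : Fin n) : sgn T a a = 0 := by simp [sgn]

lemma sgn_antisym (T : Fin n → Fin n → Bool) (a b : Fin n) : sgn T b a = - sgn T a b := by
  unfold sgn; ring

lemma ee_symm (a b : Fin n) : ee b a = ee a b := by simp [ee, eq_comm]

lemma sgn_sq {T : Fin n → Fin n → Bool} (hT : IsTournament T) (a b : Fin n) :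
    (sgn T a b) ^ 2 = ee a b := by
  rcases eq_or_ne a b with rfl | h
  · simp [sgn, ee]
  · have := hT.2 a b h
    unfold sgn ee
    cases hab : T a b <;> cases hba : T b a <;> simp_all

lemma sgn_sq_le_one (T : Fin n → Fin n → Bool) (a b : Fin n) : (sgn T a b) ^ 2 ≤ 1 := by
  unfold sgn; cases hab : T a b <;> cases hba : T b a <;> norm_num

lemma tt_eq {T : Fin n → Fin n → Bool} (hT : IsTournament T) (a b : Fin n) :
    tt T a b = (ee a b + sgn T a b) / 2 := by
  rcases eq_or_ne a b with rfl | h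
  · simp [tt, ee, sgn, hT.1 a]
  · have := hT.2 a b h
    unfold tt ee sgn
    cases hab : T a b <;> cases hba : T b a <;> simp_all

/-- generic: sum of antisymmetric times symmetric vanishes -/
lemma sum_antisym_symm (A : Finset (Fin n)) (f g : Fin n → Fin n → ℝ)
    (hf : ∀ a b, f b a = - f a b) (hg : ∀ a b, g b a = g a b) :
    ∑ a ∈ A, ∑ b ∈ A, f a b * g a b = 0 := by
  have h : ∑ a ∈ A, ∑ b ∈ A, f a b * g a b = - ∑ a ∈ A, ∑ b ∈ A, f a b * g a b := by
    calc ∑ a ∈ A, ∑ b ∈ A, f a b * g a b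
        = ∑ b ∈ A, ∑ a ∈ A, f a b * g a b := Finset.sum_comm
      _ = ∑ b ∈ A, ∑ a ∈ A, -(f b a * g b a) := by
          apply Finset.sum_congr rfl; intro b _; apply Finset.sum_congr rfl; intro a _
          rw [hf b a, hg b a]; ring
      _ = - ∑ b ∈ A, ∑ a ∈ A, f b a * g b a := by simp [Finset.sum_neg_distrib]
  linarith

/-- row sums -/
noncomputable def rowR (T : Fin n → Fin n → Bool) (A : Finset (Fin n)) (v : Fin n) : ℝ :=
  ∑ u ∈ A, sgn T v u

lemma sum_sgn_col (T : Fin n → Fin n → Bool) (A : Finset (Fin n)) (v : Fin n) :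
    ∑ u ∈ A, sgn T u v = - rowR T A v := by
  unfold rowR
  rw [← Finset.sum_neg_distrib]
  exact Finset.sum_congr rfl fun u _ => sgn_antisym T v u

lemma sum_ind (A : Finset (Fin n)) (a : Fin n) (ha : a ∈ A) :
    ∑ x ∈ A, (if a = x then (1:ℝ) else 0) = 1 := by
  rw [Finset.sum_ite_eq]; simp [ha]

lemma sum_ind' (A : Finset (Fin n)) (a : Fin n) (ha : a ∈ A) :
    ∑ x ∈ A, (if x = a then (1:ℝ) else 0) = 1 := by
  rw [Finset.sum_ite_eq']; simp [ha]

lemma ee_eq (a b : Fin n) : ee a b = 1 - (if a = b then (1:ℝ) else 0) := by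
  unfold ee; split <;> norm_num

lemma sum_ee_row (A : Finset (Fin n)) (a : Fin n) (ha : a ∈ A) :
    ∑ x ∈ A, ee a x = (A.card : ℝ) - 1 := by
  simp only [ee_eq]
  rw [Finset.sum_sub_distrib, Finset.sum_const, sum_ind A a ha]
  simp


lemma sum_ind_mul (A : Finset (Fin n)) (a b : Fin n) (hb : b ∈ A) :
    ∑ c ∈ A, (if b = c then (1:ℝ) else 0) * (if c = a then 1 else 0)
      = if b = a then 1 else 0 := by
  simp only [ite_mul, one_mul, zero_mul]
  rw [Finset.sum_ite_eq]
  simp [hb]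

lemma inner_ee (A : Finset (Fin n)) (a b : Fin n) (ha : a ∈ A) (hb : b ∈ A) :
    ∑ c ∈ A, ee b c * ee c a = (A.card : ℝ) - 2 + (if b = a then 1 else 0) := by
  have pt : ∀ c, ee b c * ee c a =
      1 - (if b = c then (1:ℝ) else 0) - (if c = a then 1 else 0)
        + (if b = c then (1:ℝ) else 0) * (if c = a then 1 else 0) := by
    intro c; rw [ee_eq, ee_eq]; ring
  simp only [pt]
  rw [Finset.sum_add_distrib, Finset.sum_sub_distrib, Finset.sum_sub_distrib,
    Finset.sum_const, sum_ind A b hb, sum_ind' A a ha, sum_ind_mul A a b hb]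
  simp
  ring

lemma sum_ee_ee (A : Finset (Fin n)) :
    ∑ a ∈ A, ∑ b ∈ A, ee a b = (A.card : ℝ) * ((A.card : ℝ) - 1) := by
  rw [Finset.sum_congr rfl (fun a ha => sum_ee_row A a ha), Finset.sum_const]
  simp [mul_comm]

lemma S1_eq (A : Finset (Fin n)) :
    ∑ a ∈ A, ∑ b ∈ A, ∑ c ∈ A, ee a b * ee b c * ee c a
      = (A.card : ℝ) * ((A.card : ℝ) - 1) * ((A.card : ℝ) - 2) := by
  have step : ∀ a ∈ A, ∀ b ∈ A, ∑ c ∈ A, ee a b * ee b c * ee c a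
      = ((A.card : ℝ) - 2) * ee a b := by
    intro a ha b hb
    have : ∑ c ∈ A, ee a b * ee b c * ee c a = ee a b * ∑ c ∈ A, ee b c * ee c a := by
      rw [Finset.mul_sum]; exact Finset.sum_congr rfl fun c _ => by ring
    rw [this, inner_ee A a b ha hb]
    rcases eq_or_ne b a with rfl | h
    · simp [ee, eq_comm]
    · simp only [if_neg h]; ring
  calc ∑ a ∈ A, ∑ b ∈ A, ∑ c ∈ A, ee a b * ee b c * ee c a
      = ∑ a ∈ A, ∑ b ∈ A, ((A.card : ℝ) - 2) * ee a b := by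
        apply Finset.sum_congr rfl; intro a ha
        exact Finset.sum_congr rfl fun b hb => step a ha b hb
    _ = ((A.card : ℝ) - 2) * ∑ a ∈ A, ∑ b ∈ A, ee a b := by
        simp [Finset.mul_sum]
    _ = _ := by rw [sum_ee_ee]; ring

lemma sum3_antisym (A : Finset (Fin n)) (f : Fin n → Fin n → Fin n → ℝ)
    (hf : ∀ a b c, f c b a = - f a b c) :
    ∑ a ∈ A, ∑ b ∈ A, ∑ c ∈ A, f a b c = 0 := by
  have h : ∑ a ∈ A, ∑ b ∈ A, ∑ c ∈ A, f a b c
      = - ∑ a ∈ A, ∑ b ∈ A, ∑ c ∈ A, f a b c := by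
    calc ∑ a ∈ A, ∑ b ∈ A, ∑ c ∈ A, f a b c
        = ∑ a ∈ A, ∑ c ∈ A, ∑ b ∈ A, f a b c :=
          Finset.sum_congr rfl fun a _ => Finset.sum_comm
      _ = ∑ c ∈ A, ∑ a ∈ A, ∑ b ∈ A, f a b c := Finset.sum_comm
      _ = ∑ c ∈ A, ∑ b ∈ A, ∑ a ∈ A, f a b c :=
          Finset.sum_congr rfl fun c _ => Finset.sum_comm
      _ = ∑ c ∈ A, ∑ b ∈ A, ∑ a ∈ A, - f c b a := by
          apply Finset.sum_congr rfl; intro c _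
          apply Finset.sum_congr rfl; intro b _
          exact Finset.sum_congr rfl fun a _ => (by rw [hf])
      _ = - ∑ c ∈ A, ∑ b ∈ A, ∑ a ∈ A, f c b a := by
          simp [Finset.sum_neg_distrib]
  linarith

lemma S8_eq (T : Fin n → Fin n → Bool) (A : Finset (Fin n)) :
    ∑ a ∈ A, ∑ b ∈ A, ∑ c ∈ A, sgn T a b * sgn T b c * sgn T c a = 0 := by
  apply sum3_antisym
  intro a b c
  rw [show sgn T c b = - sgn T b c from sgn_antisym T b c,
    show sgn T b a = - sgn T a b from sgn_antisym T a b,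
    show sgn T a c = - sgn T c a from sgn_antisym T c a]
  ring


lemma Z3_eq (T : Fin n → Fin n → Bool) (A : Finset (Fin n)) :
    ∑ a ∈ A, ∑ b ∈ A, ∑ c ∈ A, sgn T a b * ee b c * ee c a = 0 := by
  have step : ∑ a ∈ A, ∑ b ∈ A, ∑ c ∈ A, sgn T a b * ee b c * ee c a
      = ∑ a ∈ A, ∑ b ∈ A, sgn T a b * (∑ c ∈ A, ee b c * ee c a) := by
    apply Finset.sum_congr rfl; intro a _
    apply Finset.sum_congr rfl; intro b _
    rw [Finset.mul_sum]
    exact Finset.sum_congr rfl fun c _ => by ring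
  rw [step]
  apply sum_antisym_symm A (sgn T) _ (sgn_antisym T)
  intro x y
  apply Finset.sum_congr rfl; intro c _
  rw [ee_symm x c, ee_symm c y]; ring

lemma Z1_eq (T : Fin n → Fin n → Bool) (A : Finset (Fin n)) :
    ∑ a ∈ A, ∑ b ∈ A, ∑ c ∈ A, ee a b * ee b c * sgn T c a = 0 := by
  have step : ∑ a ∈ A, ∑ b ∈ A, ∑ c ∈ A, ee a b * ee b c * sgn T c a
      = ∑ c ∈ A, ∑ a ∈ A, sgn T c a * (∑ b ∈ A, ee a b * ee b c) := by
    calc ∑ a ∈ A, ∑ b ∈ A, ∑ c ∈ A, ee a b * ee b c * sgn T c a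
        = ∑ a ∈ A, ∑ c ∈ A, ∑ b ∈ A, ee a b * ee b c * sgn T c a :=
          Finset.sum_congr rfl fun a _ => Finset.sum_comm
      _ = ∑ c ∈ A, ∑ a ∈ A, ∑ b ∈ A, ee a b * ee b c * sgn T c a := Finset.sum_comm
      _ = _ := by
          apply Finset.sum_congr rfl; intro c _
          apply Finset.sum_congr rfl; intro a _
          rw [Finset.mul_sum]
          exact Finset.sum_congr rfl fun b _ => by ring
  rw [step]
  apply sum_antisym_symm A (sgn T) _ (sgn_antisym T)
  intro x y
  apply Finset.sum_congr rfl; intro b _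
  rw [ee_symm y b, ee_symm b x]; ring

lemma Z2_eq (T : Fin n → Fin n → Bool) (A : Finset (Fin n)) :
    ∑ a ∈ A, ∑ b ∈ A, ∑ c ∈ A, ee a b * sgn T b c * ee c a = 0 := by
  have step : ∑ a ∈ A, ∑ b ∈ A, ∑ c ∈ A, ee a b * sgn T b c * ee c a
      = ∑ b ∈ A, ∑ c ∈ A, sgn T b c * (∑ a ∈ A, ee a b * ee c a) := by
    calc ∑ a ∈ A, ∑ b ∈ A, ∑ c ∈ A, ee a b * sgn T b c * ee c a
        = ∑ b ∈ A, ∑ a ∈ A, ∑ c ∈ A, ee a b * sgn T b c * ee c a := Finset.sum_comm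
      _ = ∑ b ∈ A, ∑ c ∈ A, ∑ a ∈ A, ee a b * sgn T b c * ee c a :=
          Finset.sum_congr rfl fun b _ => Finset.sum_comm
      _ = _ := by
          apply Finset.sum_congr rfl; intro b _
          apply Finset.sum_congr rfl; intro c _
          rw [Finset.mul_sum]
          exact Finset.sum_congr rfl fun a _ => by ring
  rw [step]
  apply sum_antisym_symm A (sgn T) _ (sgn_antisym T)
  intro x y
  apply Finset.sum_congr rfl; intro a _
  rw [ee_symm a x, ee_symm y a]; ring


lemma sgn_mul_rev (T : Fin n → Fin n → Bool) (a b : Fin n) :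
    sgn T a b * sgn T b a = - (sgn T a b) ^ 2 := by
  rw [sgn_antisym T a b]; ring

lemma W1_ge (T : Fin n → Fin n → Bool) (A : Finset (Fin n)) :
    - ∑ v ∈ A, (rowR T A v) ^ 2
      ≤ ∑ a ∈ A, ∑ b ∈ A, ∑ c ∈ A, sgn T a b * sgn T b c * ee c a := by
  have pt : ∀ a b c : Fin n, sgn T a b * sgn T b c * ee c a
      = sgn T a b * sgn T b c - (if c = a then sgn T a b * sgn T b c else 0) := by
    intro a b c; rw [ee_eq c a]; split <;> ring
  have hP : ∑ a ∈ A, ∑ b ∈ A, ∑ c ∈ A, sgn T a b * sgn T b c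
      = - ∑ v ∈ A, (rowR T A v) ^ 2 := by
    calc ∑ a ∈ A, ∑ b ∈ A, ∑ c ∈ A, sgn T a b * sgn T b c
        = ∑ a ∈ A, ∑ b ∈ A, sgn T a b * rowR T A b := by
          apply Finset.sum_congr rfl; intro a _
          apply Finset.sum_congr rfl; intro b _
          rw [rowR, Finset.mul_sum]
      _ = ∑ b ∈ A, ∑ a ∈ A, sgn T a b * rowR T A b := Finset.sum_comm
      _ = ∑ b ∈ A, (∑ a ∈ A, sgn T a b) * rowR T A b := by
          apply Finset.sum_congr rfl; intro b _
          rw [Finset.sum_mul]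
      _ = ∑ b ∈ A, (- rowR T A b) * rowR T A b := by
          apply Finset.sum_congr rfl; intro b _
          rw [sum_sgn_col]
      _ = - ∑ v ∈ A, (rowR T A v) ^ 2 := by
          rw [← Finset.sum_neg_distrib]
          exact Finset.sum_congr rfl fun v _ => by ring
  have hQ : ∀ a ∈ A, ∀ b ∈ A, ∑ c ∈ A, (if c = a then sgn T a b * sgn T b c else 0)
      = - (sgn T a b) ^ 2 := by
    intro a ha b hb
    rw [Finset.sum_ite_eq' A a (fun c => sgn T a b * sgn T b c)]
    simp only [ha, if_true]
    rw [sgn_antisym T a b]; ring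
  calc - ∑ v ∈ A, (rowR T A v) ^ 2
      ≤ - ∑ v ∈ A, (rowR T A v) ^ 2 + ∑ a ∈ A, ∑ b ∈ A, (sgn T a b) ^ 2 := by
        have : (0:ℝ) ≤ ∑ a ∈ A, ∑ b ∈ A, (sgn T a b) ^ 2 :=
          Finset.sum_nonneg fun a _ => Finset.sum_nonneg fun b _ => sq_nonneg _
        linarith
    _ = ∑ a ∈ A, ∑ b ∈ A, ∑ c ∈ A, sgn T a b * sgn T b c * ee c a := by
        simp only [pt, Finset.sum_sub_distrib]
        rw [hP]
        have : ∑ a ∈ A, ∑ b ∈ A, ∑ c ∈ A, (if c = a then sgn T a b * sgn T b c else 0)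
            = - ∑ a ∈ A, ∑ b ∈ A, (sgn T a b) ^ 2 := by
          rw [← Finset.sum_neg_distrib]
          apply Finset.sum_congr rfl; intro a ha
          rw [← Finset.sum_neg_distrib]
          exact Finset.sum_congr rfl fun b hb => hQ a ha b hb
        rw [this]; ring

lemma W2_ge (T : Fin n → Fin n → Bool) (A : Finset (Fin n)) :
    - ∑ v ∈ A, (rowR T A v) ^ 2
      ≤ ∑ a ∈ A, ∑ b ∈ A, ∑ c ∈ A, sgn T a b * ee b c * sgn T c a := by
  have pt : ∀ a b c : Fin n, sgn T a b * ee b c * sgn T c a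
      = sgn T a b * sgn T c a - (if b = c then sgn T a b * sgn T c a else 0) := by
    intro a b c; rw [ee_eq b c]; split <;> ring
  have hP : ∑ a ∈ A, ∑ b ∈ A, ∑ c ∈ A, sgn T a b * sgn T c a
      = - ∑ v ∈ A, (rowR T A v) ^ 2 := by
    calc ∑ a ∈ A, ∑ b ∈ A, ∑ c ∈ A, sgn T a b * sgn T c a
        = ∑ a ∈ A, (∑ b ∈ A, sgn T a b) * (∑ c ∈ A, sgn T c a) := by
          apply Finset.sum_congr rfl; intro a _
          rw [Finset.sum_mul]
          apply Finset.sum_congr rfl; intro b _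
          rw [Finset.mul_sum]
      _ = ∑ a ∈ A, rowR T A a * (- rowR T A a) := by
          apply Finset.sum_congr rfl; intro a _
          rw [sum_sgn_col]; rfl
      _ = - ∑ v ∈ A, (rowR T A v) ^ 2 := by
          rw [← Finset.sum_neg_distrib]
          exact Finset.sum_congr rfl fun v _ => by ring
  have hQ : ∀ a ∈ A, ∀ b ∈ A, ∑ c ∈ A, (if b = c then sgn T a b * sgn T c a else 0)
      = - (sgn T a b) ^ 2 := by
    intro a ha b hb
    rw [Finset.sum_ite_eq A b (fun c => sgn T a b * sgn T c a)]
    simp only [hb, if_true]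
    rw [sgn_antisym T a b]; ring
  calc - ∑ v ∈ A, (rowR T A v) ^ 2
      ≤ - ∑ v ∈ A, (rowR T A v) ^ 2 + ∑ a ∈ A, ∑ b ∈ A, (sgn T a b) ^ 2 := by
        have : (0:ℝ) ≤ ∑ a ∈ A, ∑ b ∈ A, (sgn T a b) ^ 2 :=
          Finset.sum_nonneg fun a _ => Finset.sum_nonneg fun b _ => sq_nonneg _
        linarith
    _ = ∑ a ∈ A, ∑ b ∈ A, ∑ c ∈ A, sgn T a b * ee b c * sgn T c a := by
        simp only [pt, Finset.sum_sub_distrib]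
        rw [hP]
        have : ∑ a ∈ A, ∑ b ∈ A, ∑ c ∈ A, (if b = c then sgn T a b * sgn T c a else 0)
            = - ∑ a ∈ A, ∑ b ∈ A, (sgn T a b) ^ 2 := by
          rw [← Finset.sum_neg_distrib]
          apply Finset.sum_congr rfl; intro a ha
          rw [← Finset.sum_neg_distrib]
          exact Finset.sum_congr rfl fun b hb => hQ a ha b hb
        rw [this]; ring

lemma W3_ge (T : Fin n → Fin n → Bool) (A : Finset (Fin n)) :
    - ∑ v ∈ A, (rowR T A v) ^ 2
      ≤ ∑ a ∈ A, ∑ b ∈ A, ∑ c ∈ A, ee a b * sgn T b c * sgn T c a := by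
  have pt : ∀ a b c : Fin n, ee a b * sgn T b c * sgn T c a
      = sgn T b c * sgn T c a - (if a = b then sgn T b c * sgn T c a else 0) := by
    intro a b c; rw [ee_eq a b]; split <;> ring
  have hP : ∑ a ∈ A, ∑ b ∈ A, ∑ c ∈ A, sgn T b c * sgn T c a
      = - ∑ v ∈ A, (rowR T A v) ^ 2 := by
    calc ∑ a ∈ A, ∑ b ∈ A, ∑ c ∈ A, sgn T b c * sgn T c a
        = ∑ a ∈ A, ∑ c ∈ A, ∑ b ∈ A, sgn T b c * sgn T c a :=
          Finset.sum_congr rfl fun a _ => Finset.sum_comm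
      _ = ∑ a ∈ A, ∑ c ∈ A, (- rowR T A c) * sgn T c a := by
          apply Finset.sum_congr rfl; intro a _
          apply Finset.sum_congr rfl; intro c _
          rw [← Finset.sum_mul, sum_sgn_col]
      _ = ∑ c ∈ A, ∑ a ∈ A, (- rowR T A c) * sgn T c a := Finset.sum_comm
      _ = ∑ c ∈ A, (- rowR T A c) * rowR T A c := by
          apply Finset.sum_congr rfl; intro c _
          rw [← Finset.mul_sum]; rfl
      _ = - ∑ v ∈ A, (rowR T A v) ^ 2 := by
          rw [← Finset.sum_neg_distrib]
          exact Finset.sum_congr rfl fun v _ => by ring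
  have hQ : ∀ a ∈ A, ∑ b ∈ A, ∑ c ∈ A, (if a = b then sgn T b c * sgn T c a else 0)
      = ∑ c ∈ A, - (sgn T a c) ^ 2 := by
    intro a ha
    have : ∀ b ∈ A, ∑ c ∈ A, (if a = b then sgn T b c * sgn T c a else 0)
        = if a = b then (∑ c ∈ A, sgn T b c * sgn T c a) else 0 := by
      intro b _
      split
      · rfl
      · simp
    rw [Finset.sum_congr rfl this, Finset.sum_ite_eq A a
      (fun b => ∑ c ∈ A, sgn T b c * sgn T c a)]
    simp only [ha, if_true]
    exact Finset.sum_congr rfl fun c _ => by rw [sgn_antisym T a c]; ring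
  calc - ∑ v ∈ A, (rowR T A v) ^ 2
      ≤ - ∑ v ∈ A, (rowR T A v) ^ 2 + ∑ a ∈ A, ∑ c ∈ A, (sgn T a c) ^ 2 := by
        have : (0:ℝ) ≤ ∑ a ∈ A, ∑ c ∈ A, (sgn T a c) ^ 2 :=
          Finset.sum_nonneg fun a _ => Finset.sum_nonneg fun b _ => sq_nonneg _
        linarith
    _ = ∑ a ∈ A, ∑ b ∈ A, ∑ c ∈ A, ee a b * sgn T b c * sgn T c a := by
        simp only [pt, Finset.sum_sub_distrib]
        rw [hP]
        have h2 : ∑ a ∈ A, ∑ b ∈ A, ∑ c ∈ A, (if a = b then sgn T b c * sgn T c a else 0)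
            = ∑ a ∈ A, ∑ c ∈ A, - (sgn T a c) ^ 2 := by
          exact Finset.sum_congr rfl fun a ha => hQ a ha
        rw [h2]
        simp only [Finset.sum_neg_distrib]
        ring

lemma rev_false {T : Fin n → Fin n → Bool} (hT : IsTournament T) {a b : Fin n}
    (h : T a b = true) : T b a = false := by
  have hne : a ≠ b := fun he => by rw [he, hT.1] at h; exact Bool.false_ne_true h
  have := hT.2 b a hne.symm
  rw [this, h]; rfl

lemma ne_of_arc {T : Fin n → Fin n → Bool} (hT : IsTournament T) {a b : Fin n}
    (h : T a b = true) : a ≠ b := fun he => by rw [he, hT.1] at h; exact Bool.false_ne_true h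

lemma three_mul_card {T : Fin n → Fin n → Bool} (hT : IsTournament T) (A : Finset (Fin n)) :
    3 * ((A.powersetCard 3).filter (IsCyclicTriple T)).card =
    ((A ×ˢ A ×ˢ A).filter
      (fun p => T p.1 p.2.1 = true ∧ T p.2.1 p.2.2 = true ∧ T p.2.2 p.1 = true)).card := by
  set O := (A ×ˢ A ×ˢ A).filter
      (fun p => T p.1 p.2.1 = true ∧ T p.2.1 p.2.2 = true ∧ T p.2.2 p.1 = true) with hO
  set S := (A.powersetCard 3).filter (IsCyclicTriple T) with hS
  have H : ∀ p ∈ O, ({p.1, p.2.1, p.2.2} : Finset (Fin n)) ∈ S := by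
    rintro ⟨p1, p2, p3⟩ hp
    simp only [hO, Finset.mem_filter, Finset.mem_product] at hp
    obtain ⟨⟨h1A, h2A, h3A⟩, h12, h23, h31⟩ := hp
    have d12 : p1 ≠ p2 := ne_of_arc hT h12
    have d23 : p2 ≠ p3 := ne_of_arc hT h23
    have d13 : p1 ≠ p3 := (ne_of_arc hT h31).symm
    simp only [hS, Finset.mem_filter, Finset.mem_powersetCard]
    refine ⟨⟨?_, ?_⟩, ?_⟩
    · intro w hw
      simp only [Finset.mem_insert, Finset.mem_singleton] at hw
      rcases hw with rfl | rfl | rfl <;> assumption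
    · exact Finset.card_eq_three.mpr ⟨p1, p2, p3, d12, d13, d23, rfl⟩
    · exact ⟨p1, p2, p3, d12, d13, d23, rfl, Or.inl ⟨h12, h23, h31⟩⟩
  rw [Finset.card_eq_sum_card_fiberwise H]
  have hfib : ∀ s ∈ S, (O.filter (fun p => ({p.1, p.2.1, p.2.2} : Finset (Fin n)) = s)).card = 3 := by
    intro s hs
    simp only [hS, Finset.mem_filter, Finset.mem_powersetCard] at hs
    obtain ⟨⟨hsub, hcard⟩, a, b, c, hab, hac, hbc, hseq, hor⟩ := hs
    -- normalize orientation
    obtain ⟨x, y, z, dxy, dxz, dyz, hsxyz, hxy, hyz, hzx⟩ :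
        ∃ x y z : Fin n, x ≠ y ∧ x ≠ z ∧ y ≠ z ∧ s = {x, y, z} ∧
          T x y = true ∧ T y z = true ∧ T z x = true := by
      rcases hor with ⟨h1, h2, h3⟩ | ⟨h1, h2, h3⟩
      · exact ⟨a, b, c, hab, hac, hbc, hseq, h1, h2, h3⟩
      · refine ⟨b, a, c, hab.symm, hbc, hac, ?_, h1, h3, h2⟩
        rw [hseq]; ext w; simp; tauto
    have hxA : x ∈ A := hsub (by rw [hsxyz]; simp)
    have hyA : y ∈ A := hsub (by rw [hsxyz]; simp)
    have hzA : z ∈ A := hsub (by rw [hsxyz]; simp)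
    have hyx : T y x = false := rev_false hT hxy
    have hzy : T z y = false := rev_false hT hyz
    have hxz : T x z = false := rev_false hT hzx
    have hset : O.filter (fun p => ({p.1, p.2.1, p.2.2} : Finset (Fin n)) = s)
        = {(x, y, z), (y, z, x), (z, x, y)} := by
      ext ⟨p1, p2, p3⟩
      simp only [hO, Finset.mem_filter, Finset.mem_product, Finset.mem_insert,
        Finset.mem_singleton, Prod.mk.injEq]
      constructor
      · rintro ⟨⟨⟨h1A, h2A, h3A⟩, h12, h23, h31⟩, hfs⟩
        have m1 : p1 = x ∨ p1 = y ∨ p1 = z := by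
          have : p1 ∈ ({p1, p2, p3} : Finset (Fin n)) := by simp
          rw [hfs, hsxyz] at this; simpa using this
        have m2 : p2 = x ∨ p2 = y ∨ p2 = z := by
          have : p2 ∈ ({p1, p2, p3} : Finset (Fin n)) := by simp
          rw [hfs, hsxyz] at this; simpa using this
        have m3 : p3 = x ∨ p3 = y ∨ p3 = z := by
          have : p3 ∈ ({p1, p2, p3} : Finset (Fin n)) := by simp
          rw [hfs, hsxyz] at this; simpa using this
        have hxx : T x x = false := hT.1 x
        have hyy : T y y = false := hT.1 y
        have hzz : T z z = false := hT.1 z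
        clear hfs H
        rcases m1 with rfl | rfl | rfl <;> rcases m2 with rfl | rfl | rfl <;>
          rcases m3 with rfl | rfl | rfl <;> simp_all
      · have e1 : ({y, z, x} : Finset (Fin n)) = {x, y, z} := by ext w; simp; tauto
        have e2 : ({z, x, y} : Finset (Fin n)) = {x, y, z} := by ext w; simp; tauto
        rintro (⟨rfl, rfl, rfl⟩ | ⟨rfl, rfl, rfl⟩ | ⟨rfl, rfl, rfl⟩)
        · exact ⟨⟨⟨hxA, hyA, hzA⟩, hxy, hyz, hzx⟩, by rw [hsxyz]⟩
        · exact ⟨⟨⟨hyA, hzA, hxA⟩, hyz, hzx, hxy⟩, by rw [hsxyz, e1]⟩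
        · exact ⟨⟨⟨hzA, hxA, hyA⟩, hzx, hxy, hyz⟩, by rw [hsxyz, e2]⟩
    rw [hset]
    rw [Finset.card_insert_of_notMem (by simp [Prod.ext_iff]; tauto),
      Finset.card_insert_of_notMem (by simp [Prod.ext_iff]; tauto),
      Finset.card_singleton]
  rw [Finset.sum_congr rfl hfib, Finset.sum_const, smul_eq_mul, mul_comm]


lemma sum_ttt_eq {T : Fin n → Fin n → Bool} (hT : IsTournament T) (A : Finset (Fin n)) :
    ∑ a ∈ A, ∑ b ∈ A, ∑ c ∈ A, tt T a b * tt T b c * tt T c a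
      = 3 * (((A.powersetCard 3).filter (IsCyclicTriple T)).card : ℝ) := by
  have h2 : ((((A ×ˢ A ×ˢ A).filter
      (fun p => T p.1 p.2.1 = true ∧ T p.2.1 p.2.2 = true ∧ T p.2.2 p.1 = true)).card : ℕ) : ℝ)
      = ∑ a ∈ A, ∑ b ∈ A, ∑ c ∈ A, tt T a b * tt T b c * tt T c a := by
    rw [Finset.card_filter]
    push_cast
    rw [Finset.sum_product]
    apply Finset.sum_congr rfl; intro a _
    rw [Finset.sum_product]
    apply Finset.sum_congr rfl; intro b _
    apply Finset.sum_congr rfl; intro c _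
    by_cases h1 : T a b = true <;> by_cases h2 : T b c = true <;> by_cases h3 : T c a = true <;>
      simp [tt, h1, h2, h3]
  rw [← h2, ← three_mul_card hT A]
  push_cast
  ring

lemma cyc_lower {T : Fin n → Fin n → Bool} (hT : IsTournament T) (A : Finset (Fin n)) :
    (A.card : ℝ) * ((A.card : ℝ) - 1) * ((A.card : ℝ) - 2) / 24
        - (∑ v ∈ A, (rowR T A v) ^ 2) / 8
      ≤ (((A.powersetCard 3).filter (IsCyclicTriple T)).card : ℝ) := by
  have pt : ∀ a b c : Fin n, 8 * (tt T a b * tt T b c * tt T c a)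
      = ee a b * ee b c * ee c a
        + sgn T a b * ee b c * ee c a
        + ee a b * sgn T b c * ee c a
        + ee a b * ee b c * sgn T c a
        + sgn T a b * sgn T b c * ee c a
        + sgn T a b * ee b c * sgn T c a
        + ee a b * sgn T b c * sgn T c a
        + sgn T a b * sgn T b c * sgn T c a := by
    intro a b c
    rw [tt_eq hT a b, tt_eq hT b c, tt_eq hT c a]
    ring
  have expand : 8 * (∑ a ∈ A, ∑ b ∈ A, ∑ c ∈ A, tt T a b * tt T b c * tt T c a)
      = (∑ a ∈ A, ∑ b ∈ A, ∑ c ∈ A, ee a b * ee b c * ee c a)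
        + (∑ a ∈ A, ∑ b ∈ A, ∑ c ∈ A, sgn T a b * ee b c * ee c a)
        + (∑ a ∈ A, ∑ b ∈ A, ∑ c ∈ A, ee a b * sgn T b c * ee c a)
        + (∑ a ∈ A, ∑ b ∈ A, ∑ c ∈ A, ee a b * ee b c * sgn T c a)
        + (∑ a ∈ A, ∑ b ∈ A, ∑ c ∈ A, sgn T a b * sgn T b c * ee c a)
        + (∑ a ∈ A, ∑ b ∈ A, ∑ c ∈ A, sgn T a b * ee b c * sgn T c a)
        + (∑ a ∈ A, ∑ b ∈ A, ∑ c ∈ A, ee a b * sgn T b c * sgn T c a)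
        + (∑ a ∈ A, ∑ b ∈ A, ∑ c ∈ A, sgn T a b * sgn T b c * sgn T c a) := by
    simp only [Finset.mul_sum]
    simp only [pt]
    simp only [Finset.sum_add_distrib]
  rw [sum_ttt_eq hT A] at expand
  have e1 := S1_eq A
  have e2 := Z3_eq T A
  have e3 := Z2_eq T A
  have e4 := Z1_eq T A
  have e5 := S8_eq T A
  have i1 := W1_ge T A
  have i2 := W2_ge T A
  have i3 := W3_ge T A
  linarith


noncomputable def Ypair (T : Fin n → Fin n → Bool) (u w : Fin n) : ℝ :=
  ∑ v : Fin n, sgn T v u * sgn T v w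

noncomputable def Zstat (T : Fin n → Fin n → Bool) : ℝ :=
  ∑ p ∈ (Finset.univ : Finset (Fin n)).offDiag, (Ypair T p.1 p.2) ^ 2

def flipF (i j : Fin n) (T : Fin n → Fin n → Bool) : Fin n → Fin n → Bool :=
  fun a b => if (a = i ∧ b = j) ∨ (a = j ∧ b = i) then !T a b else T a b

lemma flipF_tour {i j : Fin n} (hij : i ≠ j) {T : Fin n → Fin n → Bool}
    (hT : IsTournament T) : IsTournament (flipF i j T) := by
  constructor
  · intro a
    unfold flipF
    rw [if_neg, hT.1]
    rintro (⟨rfl, rfl⟩ | ⟨rfl, rfl⟩) <;> exact hij rfl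
  · intro a b hab
    have hcond : ((a = i ∧ b = j) ∨ (a = j ∧ b = i)) ↔ ((b = i ∧ a = j) ∨ (b = j ∧ a = i)) := by
      tauto
    unfold flipF
    by_cases h : (a = i ∧ b = j) ∨ (a = j ∧ b = i)
    · rw [if_pos h, if_pos (hcond.mp h), hT.2 a b hab, Bool.not_not]
    · rw [if_neg h, if_neg (fun h' => h (hcond.mpr h')), hT.2 a b hab]

lemma flipF_invol (i j : Fin n) (T : Fin n → Fin n → Bool) :
    flipF i j (flipF i j T) = T := by
  funext a b
  by_cases h : (a = i ∧ b = j) ∨ (a = j ∧ b = i) <;> simp [flipF, h]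

lemma sum_flip_zero {i j : Fin n} (hij : i ≠ j)
    (f : {T : Fin n → Fin n → Bool // IsTournament T} → ℝ)
    (hf : ∀ T : {T : Fin n → Fin n → Bool // IsTournament T},
      f ⟨flipF i j T.1, flipF_tour hij T.2⟩ = - f T) :
    ∑ T : {T : Fin n → Fin n → Bool // IsTournament T}, f T = 0 := by
  set e : {T : Fin n → Fin n → Bool // IsTournament T} →
      {T : Fin n → Fin n → Bool // IsTournament T} :=
    fun T => ⟨flipF i j T.1, flipF_tour hij T.2⟩ with he
  have hinv : Function.Involutive e := by
    intro T
    apply Subtype.ext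
    exact flipF_invol i j T.1
  have hbij : Function.Bijective e := hinv.bijective
  have h1 : ∑ T, f (e T) = ∑ T, f T := Function.Bijective.sum_comp hbij f
  have h2 : ∑ T, f (e T) = - ∑ T, f T := by
    rw [← Finset.sum_neg_distrib]
    exact Finset.sum_congr rfl fun T _ => hf T
  linarith

lemma sgn_flip_same (T : Fin n → Fin n → Bool) (i j : Fin n) :
    sgn (flipF i j T) i j = - sgn T i j := by
  unfold sgn flipF
  rw [if_pos (Or.inl ⟨rfl, rfl⟩), if_pos (Or.inr ⟨rfl, rfl⟩)]
  cases T i j <;> cases T j i <;> simp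

lemma sgn_flip_other (T : Fin n → Fin n → Bool) (i j a b : Fin n)
    (h : ¬ ((a = i ∧ b = j) ∨ (a = j ∧ b = i))) :
    sgn (flipF i j T) a b = sgn T a b := by
  have h' : ¬ ((b = i ∧ a = j) ∨ (b = j ∧ a = i)) := by tauto
  unfold sgn flipF
  rw [if_neg h, if_neg h']

lemma exp_Y_sq (u w : Fin n) (huw : u ≠ w) :
    ∑ T : {T : Fin n → Fin n → Bool // IsTournament T}, (Ypair T.1 u w) ^ 2
      ≤ (Fintype.card {T : Fin n → Fin n → Bool // IsTournament T} : ℝ) * n := by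
  have expand : ∀ T : {T : Fin n → Fin n → Bool // IsTournament T},
      (Ypair T.1 u w) ^ 2 = ∑ v : Fin n, ∑ v' : Fin n,
        sgn T.1 v u * sgn T.1 v w * (sgn T.1 v' u * sgn T.1 v' w) := by
    intro T
    rw [pow_two, Ypair, Finset.sum_mul_sum]
  calc ∑ T : {T : Fin n → Fin n → Bool // IsTournament T}, (Ypair T.1 u w) ^ 2
      = ∑ v : Fin n, ∑ v' : Fin n, ∑ T : {T : Fin n → Fin n → Bool // IsTournament T},
          sgn T.1 v u * sgn T.1 v w * (sgn T.1 v' u * sgn T.1 v' w) := by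
        rw [Finset.sum_congr rfl fun T _ => expand T]
        rw [Finset.sum_comm]
        exact Finset.sum_congr rfl fun v _ => Finset.sum_comm
    _ ≤ ∑ v : Fin n, (Fintype.card {T : Fin n → Fin n → Bool // IsTournament T} : ℝ) := by
        apply Finset.sum_le_sum
        intro v _
        have hdiag : ∑ T : {T : Fin n → Fin n → Bool // IsTournament T},
            sgn T.1 v u * sgn T.1 v w * (sgn T.1 v u * sgn T.1 v w)
              ≤ (Fintype.card {T : Fin n → Fin n → Bool // IsTournament T} : ℝ) := by
          calc ∑ T : {T : Fin n → Fin n → Bool // IsTournament T},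
              sgn T.1 v u * sgn T.1 v w * (sgn T.1 v u * sgn T.1 v w)
              ≤ ∑ T : {T : Fin n → Fin n → Bool // IsTournament T}, (1:ℝ) := by
                apply Finset.sum_le_sum
                intro T _
                have h1 := sgn_sq_le_one T.1 v u
                have h2 := sgn_sq_le_one T.1 v w
                have h3 := sq_nonneg (sgn T.1 v u)
                have h4 := sq_nonneg (sgn T.1 v w)
                nlinarith
            _ = (Fintype.card {T : Fin n → Fin n → Bool // IsTournament T} : ℝ) := by
                simp
        have hoff : ∀ v' : Fin n, v' ≠ v →
            ∑ T : {T : Fin n → Fin n → Bool // IsTournament T},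
              sgn T.1 v u * sgn T.1 v w * (sgn T.1 v' u * sgn T.1 v' w) = 0 := by
          intro v' hvv'
          rcases eq_or_ne v u with rfl | hvu
          · exact Finset.sum_eq_zero fun T _ => by rw [sgn_diag]; ring
          rcases eq_or_ne v w with rfl | hvw
          · exact Finset.sum_eq_zero fun T _ => by rw [sgn_diag]; ring
          rcases eq_or_ne v' u with rfl | hv'u
          · exact Finset.sum_eq_zero fun T _ => by rw [sgn_diag]; ring
          rcases eq_or_ne v' w with rfl | hv'w
          · exact Finset.sum_eq_zero fun T _ => by rw [sgn_diag]; ring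
          apply sum_flip_zero hvu
          intro T
          have e1 : sgn (flipF v u T.1) v u = - sgn T.1 v u := sgn_flip_same T.1 v u
          have e2 : sgn (flipF v u T.1) v w = sgn T.1 v w := by
            apply sgn_flip_other
            rintro (⟨-, rfl⟩ | ⟨rfl, -⟩) <;> simp_all
          have e3 : sgn (flipF v u T.1) v' u = sgn T.1 v' u := by
            apply sgn_flip_other
            rintro (⟨rfl, -⟩ | ⟨rfl, -⟩) <;> simp_all
          have e4 : sgn (flipF v u T.1) v' w = sgn T.1 v' w := by
            apply sgn_flip_other
            rintro (⟨rfl, -⟩ | ⟨rfl, -⟩) <;> simp_all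
          simp only [e1, e2, e3, e4]
          ring
        calc ∑ v' : Fin n, ∑ T : {T : Fin n → Fin n → Bool // IsTournament T},
            sgn T.1 v u * sgn T.1 v w * (sgn T.1 v' u * sgn T.1 v' w)
            = ∑ T : {T : Fin n → Fin n → Bool // IsTournament T},
              sgn T.1 v u * sgn T.1 v w * (sgn T.1 v u * sgn T.1 v w) := by
              rw [← Finset.add_sum_erase _ _ (Finset.mem_univ v)]
              rw [Finset.sum_eq_zero (fun v' hv' => hoff v' (Finset.ne_of_mem_erase hv'))]
              ring
          _ ≤ _ := hdiag
    _ = (Fintype.card {T : Fin n → Fin n → Bool // IsTournament T} : ℝ) * n := by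
        rw [Finset.sum_const]
        simp [mul_comm]

lemma exp_Z :
    ∑ T : {T : Fin n → Fin n → Bool // IsTournament T}, Zstat T.1
      ≤ (Fintype.card {T : Fin n → Fin n → Bool // IsTournament T} : ℝ) * n ^ 3 := by
  unfold Zstat
  rw [Finset.sum_comm]
  calc ∑ p ∈ (Finset.univ : Finset (Fin n)).offDiag,
        ∑ T : {T : Fin n → Fin n → Bool // IsTournament T}, (Ypair T.1 p.1 p.2) ^ 2
      ≤ ∑ p ∈ (Finset.univ : Finset (Fin n)).offDiag,
        (Fintype.card {T : Fin n → Fin n → Bool // IsTournament T} : ℝ) * n := by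
        apply Finset.sum_le_sum
        intro p hp
        exact exp_Y_sq p.1 p.2 (Finset.mem_offDiag.mp hp).2.2
    _ ≤ _ := by
        rw [Finset.sum_const, nsmul_eq_mul]
        have hcard : ((Finset.univ : Finset (Fin n)).offDiag.card : ℝ) ≤ (n:ℝ)^2 := by
          have h1 : (Finset.univ : Finset (Fin n)).offDiag.card ≤ n * n := by
            rw [Finset.offDiag_card]
            simp only [Finset.card_univ, Fintype.card_fin]
            exact Nat.sub_le _ _
          calc ((Finset.univ : Finset (Fin n)).offDiag.card : ℝ) ≤ ((n * n : ℕ) : ℝ) :=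
                Nat.cast_le.mpr h1
            _ = (n:ℝ)^2 := by push_cast; ring
        calc ((Finset.univ : Finset (Fin n)).offDiag.card : ℝ)
              * ((Fintype.card {T : Fin n → Fin n → Bool // IsTournament T} : ℝ) * n)
            ≤ (n:ℝ)^2 * ((Fintype.card {T : Fin n → Fin n → Bool // IsTournament T} : ℝ) * n) := by
              apply mul_le_mul_of_nonneg_right hcard
              positivity
          _ = (Fintype.card {T : Fin n → Fin n → Bool // IsTournament T} : ℝ) * n ^ 3 := by ring


lemma cast_choose_three (m : ℕ) :
    ((m.choose 3 : ℕ) : ℝ) = (m:ℝ) * ((m:ℝ) - 1) * ((m:ℝ) - 2) / 6 := by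
  induction m with
  | zero => simp
  | succ k ih =>
      rw [Nat.choose_succ_succ]
      push_cast
      rw [ih, Nat.cast_choose_two]
      push_cast
      ring

lemma exists_tournament : IsTournament (fun i j : Fin n => decide ((i:ℕ) < (j:ℕ))) := by
  constructor
  · intro i; simp
  · intro i j hij
    have hne : (i:ℕ) ≠ (j:ℕ) := fun h => hij (Fin.ext h)
    by_cases h : (i:ℕ) < (j:ℕ)
    · have h2 : ¬ ((j:ℕ) < (i:ℕ)) := by omega
      simp [h, h2]
    · have h2 : (j:ℕ) < (i:ℕ) := by omega
      simp [h, h2]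

/-- deterministic implication: if `Zstat` is small then every large subset has
many cyclic triples -/
lemma main_det {T : Fin n → Fin n → Bool} (hT : IsTournament T) (ε δ : ℝ)
    (hε : 0 < ε) (hδ : 0 < δ) (hδ1 : δ ≤ 1)
    (hZ : Zstat T ≤ (ε * δ^3 / 7)^2 * (n:ℝ)^4)
    (hn1 : 3 ≤ δ * n) (hn2 : 7 ≤ ε * δ^3 * n)
    (A : Finset (Fin n)) (hA : δ * n ≤ (A.card : ℝ)) :
    (1 / 4 - ε) * (A.card.choose 3 : ℝ) ≤
      (((A.powersetCard 3).filter (IsCyclicTriple T)).card : ℝ) := by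
  set η : ℝ := ε * δ^3 / 7 with hη
  have hη0 : 0 < η := by positivity
  set m : ℝ := (A.card : ℝ) with hm
  have hm0 : 0 ≤ m := Nat.cast_nonneg _
  have hmn : m ≤ (n:ℝ) := by
    have h : A.card ≤ n := by
      have := Finset.card_le_card (Finset.subset_univ A)
      simpa using this
    rw [hm]
    exact_mod_cast h
  have hn0 : (0:ℝ) ≤ (n:ℝ) := Nat.cast_nonneg _
  have hm3 : 3 ≤ m := le_trans (by nlinarith : (3:ℝ) ≤ δ * n) hA
  -- bound on the row-sum squares
  have key : ∑ v ∈ A, (rowR T A v) ^ 2 ≤ (n:ℝ)^2 + η * (n:ℝ)^3 := by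
    have step1 : ∑ v ∈ A, (rowR T A v) ^ 2 ≤ ∑ v : Fin n, (rowR T A v) ^ 2 :=
      Finset.sum_le_sum_of_subset_of_nonneg (Finset.subset_univ A)
        (fun v _ _ => sq_nonneg _)
    have step2 : ∑ v : Fin n, (rowR T A v) ^ 2 = ∑ u ∈ A, ∑ w ∈ A, Ypair T u w := by
      have pt : ∀ v : Fin n, (rowR T A v)^2 = ∑ u ∈ A, ∑ w ∈ A, sgn T v u * sgn T v w := by
        intro v; rw [pow_two, rowR, Finset.sum_mul_sum]
      rw [Finset.sum_congr rfl fun v _ => pt v]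
      rw [Finset.sum_comm]
      apply Finset.sum_congr rfl; intro u _
      rw [Finset.sum_comm]
      rfl
    have split : ∑ u ∈ A, ∑ w ∈ A, Ypair T u w
        = (∑ u ∈ A, Ypair T u u) + ∑ p ∈ A.offDiag, Ypair T p.1 p.2 := by
      rw [← Finset.sum_product', ← Finset.diag_union_offDiag,
        Finset.sum_union (Finset.disjoint_diag_offDiag A), Finset.sum_diag]
    have diag_bd : ∑ u ∈ A, Ypair T u u ≤ (n:ℝ)^2 := by
      have h1 : ∀ u ∈ A, Ypair T u u ≤ (n:ℝ) := by
        intro u _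
        unfold Ypair
        calc ∑ v : Fin n, sgn T v u * sgn T v u ≤ ∑ v : Fin n, (1:ℝ) := by
              apply Finset.sum_le_sum
              intro v _
              have := sgn_sq_le_one T v u
              nlinarith
          _ = (n:ℝ) := by simp
      calc ∑ u ∈ A, Ypair T u u ≤ ∑ u ∈ A, (n:ℝ) := Finset.sum_le_sum h1
        _ = m * n := by rw [Finset.sum_const]; simp [hm, mul_comm]
        _ ≤ (n:ℝ)^2 := by nlinarith
    have off_bd : ∑ p ∈ A.offDiag, Ypair T p.1 p.2 ≤ η * (n:ℝ)^3 := by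
      set S := ∑ p ∈ A.offDiag, Ypair T p.1 p.2 with hS
      have hsq : S^2 ≤ (A.offDiag.card : ℝ) * ∑ p ∈ A.offDiag, (Ypair T p.1 p.2)^2 := by
        rw [hS]
        exact_mod_cast sq_sum_le_card_mul_sum_sq (s := A.offDiag)
          (f := fun p => Ypair T p.1 p.2)
      have hsub : A.offDiag ⊆ (Finset.univ : Finset (Fin n)).offDiag := by
        intro p hp
        rw [Finset.mem_offDiag] at hp ⊢
        exact ⟨Finset.mem_univ _, Finset.mem_univ _, hp.2.2⟩
      have hZZ : ∑ p ∈ A.offDiag, (Ypair T p.1 p.2)^2 ≤ Zstat T := by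
        exact Finset.sum_le_sum_of_subset_of_nonneg hsub (fun p _ _ => sq_nonneg _)
      have hcardod : (A.offDiag.card : ℝ) ≤ (n:ℝ)^2 := by
        have h1 : A.offDiag.card ≤ n * n := by
          rw [Finset.offDiag_card]
          calc A.card * A.card - A.card ≤ A.card * A.card := Nat.sub_le _ _
            _ ≤ n * n := by
              apply Nat.mul_le_mul <;>
                · have := Finset.card_le_card (Finset.subset_univ A)
                  simpa using this
        calc (A.offDiag.card : ℝ) ≤ ((n*n : ℕ) : ℝ) := Nat.cast_le.mpr h1
          _ = (n:ℝ)^2 := by push_cast; ring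
      have hZ0 : 0 ≤ ∑ p ∈ A.offDiag, (Ypair T p.1 p.2)^2 :=
        Finset.sum_nonneg fun p _ => sq_nonneg _
      have hS2 : S^2 ≤ (η * (n:ℝ)^3)^2 := by
        calc S^2 ≤ (A.offDiag.card : ℝ) * ∑ p ∈ A.offDiag, (Ypair T p.1 p.2)^2 := hsq
          _ ≤ (n:ℝ)^2 * ((η * (n:ℝ))^2 * (n:ℝ)^2) := by
              have hZ' : ∑ p ∈ A.offDiag, (Ypair T p.1 p.2)^2 ≤ η^2 * (n:ℝ)^4 :=
                le_trans hZZ hZ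
              have := mul_le_mul hcardod hZ' hZ0 (by positivity)
              calc (A.offDiag.card : ℝ) * ∑ p ∈ A.offDiag, (Ypair T p.1 p.2)^2
                  ≤ (n:ℝ)^2 * (η^2 * (n:ℝ)^4) := this
                _ = (n:ℝ)^2 * ((η * (n:ℝ))^2 * (n:ℝ)^2) := by ring
          _ = (η * (n:ℝ)^3)^2 := by ring
      calc S ≤ |S| := le_abs_self _
        _ = Real.sqrt (S^2) := (Real.sqrt_sq_eq_abs S).symm
        _ ≤ Real.sqrt ((η * (n:ℝ)^3)^2) := Real.sqrt_le_sqrt hS2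
        _ = η * (n:ℝ)^3 := Real.sqrt_sq (by positivity)
    calc ∑ v ∈ A, (rowR T A v) ^ 2 ≤ ∑ v : Fin n, (rowR T A v) ^ 2 := step1
      _ = (∑ u ∈ A, Ypair T u u) + ∑ p ∈ A.offDiag, Ypair T p.1 p.2 := by
          rw [step2, split]
      _ ≤ (n:ℝ)^2 + η * (n:ℝ)^3 := add_le_add diag_bd off_bd
  have lower := cyc_lower hT A
  rw [cast_choose_three]
  -- final arithmetic
  have hprod : (2/9) * δ^3 * (n:ℝ)^3 ≤ m * (m - 1) * (m - 2) := by
    have h1 : δ * n ≤ m := hA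
    have h2 : 0 ≤ δ * n := by positivity
    have hd3 : δ^3 * (n:ℝ)^3 ≤ m^3 := by
      have := pow_le_pow_left₀ h2 h1 3
      calc δ^3 * (n:ℝ)^3 = (δ * n)^3 := by ring
        _ ≤ m^3 := this
    have h9 : 0 ≤ m * ((m - 3) * (7 * m - 6)) := by
      apply mul_nonneg hm0
      apply mul_nonneg <;> linarith
    have hid : m * (m - 1) * (m - 2)
        = (2/9) * m^3 + (1/9) * (m * ((m - 3) * (7 * m - 6))) := by ring
    linarith
  have hfinal : ((n:ℝ)^2 + η * (n:ℝ)^3) / 8 ≤ ε * (m * (m - 1) * (m - 2)) / 6 := by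
    have hηval : η = ε * δ^3 / 7 := hη
    have hn7 : 7 ≤ ε * δ^3 * n := hn2
    have hεδ0 : 0 < ε * δ^3 := by positivity
    -- n^2 ≤ ε δ^3 n^3 / 7
    have ha : (n:ℝ)^2 ≤ ε * δ^3 * (n:ℝ)^3 / 7 := by nlinarith [sq_nonneg (n:ℝ), hn0]
    have hb : η * (n:ℝ)^3 = ε * δ^3 * (n:ℝ)^3 / 7 := by rw [hηval]; ring
    have hc : ε * δ^3 * (n:ℝ)^3 ≤ ε * (m * (m-1) * (m-2)) * (9/2) := by
      have := mul_le_mul_of_nonneg_left hprod (le_of_lt hε)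
      nlinarith
    nlinarith
  nlinarith [lower, key, hfinal, hprod, hε, hn0]

end RTaux


/-- For every ε > 0 and every 0 < δ ≤ 1, the probability that a uniformly
random tournament on `n` labeled vertices has the property that every vertex
subset `A` with `|A| ≥ δ·n` contains at least `(1/4 − ε)·C(|A|,3)` cyclic
triples tends to 1 as `n → ∞`. -/
theorem random_tournament_linear_density_quarter :
    ∀ ε : ℝ, 0 < ε → ∀ δ : ℝ, 0 < δ → δ ≤ 1 →
      Tendsto (fun n : ℕ =>
        (((Finset.univ : Finset {T : Fin n → Fin n → Bool // IsTournament T}).filter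
            (fun T => ∀ A : Finset (Fin n), δ * n ≤ (A.card : ℝ) →
              (1 / 4 - ε) * (A.card.choose 3 : ℝ) ≤
                (((A.powersetCard 3).filter (IsCyclicTriple T.1)).card : ℝ))).card : ℝ)
          / (Fintype.card {T : Fin n → Fin n → Bool // IsTournament T} : ℝ))
        atTop (nhds 1) := by
  intro ε hε δ hδ hδ1
  set η : ℝ := ε * δ^3 / 7 with hη
  have hη0 : 0 < η := by positivity
  set ratio : ℕ → ℝ := fun n =>
    (((Finset.univ : Finset {T : Fin n → Fin n → Bool // IsTournament T}).filter
        (fun T => ∀ A : Finset (Fin n), δ * n ≤ (A.card : ℝ) →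
          (1 / 4 - ε) * (A.card.choose 3 : ℝ) ≤
            (((A.powersetCard 3).filter (IsCyclicTriple T.1)).card : ℝ))).card : ℝ)
      / (Fintype.card {T : Fin n → Fin n → Bool // IsTournament T} : ℝ) with hratio
  have hlow_tendsto : Tendsto (fun n : ℕ => 1 - 1/η^2 * (1/(n:ℝ))) atTop (nhds 1) := by
    have h0 : Tendsto (fun n : ℕ => (1:ℝ)/(n:ℝ)) atTop (nhds 0) :=
      tendsto_one_div_atTop_nhds_zero_nat
    have ha : Tendsto (fun n : ℕ => 1/η^2 * (1/(n:ℝ))) atTop (nhds (1/η^2 * 0)) :=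
      h0.const_mul _
    have hb : Tendsto (fun n : ℕ => (1:ℝ) - 1/η^2 * (1/(n:ℝ))) atTop
        (nhds (1 - 1/η^2 * 0)) := Tendsto.sub tendsto_const_nhds ha
    simpa using hb
  apply tendsto_of_tendsto_of_tendsto_of_le_of_le' hlow_tendsto
    (tendsto_const_nhds : Tendsto (fun _ : ℕ => (1:ℝ)) atTop (nhds 1))
  · -- eventual lower bound
    have ev1 : ∀ᶠ n : ℕ in atTop, (3:ℝ) ≤ δ * n := by
      have h3 : Tendsto (fun x : ℕ => δ * (x:ℝ)) atTop atTop :=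
        (tendsto_natCast_atTop_atTop).const_mul_atTop hδ
      exact h3.eventually_ge_atTop 3
    have ev2 : ∀ᶠ n : ℕ in atTop, (7:ℝ) ≤ ε * δ^3 * n := by
      have h3 : Tendsto (fun x : ℕ => ε * δ^3 * (x:ℝ)) atTop atTop :=
        (tendsto_natCast_atTop_atTop).const_mul_atTop (by positivity)
      exact h3.eventually_ge_atTop 7
    filter_upwards [ev1, ev2, Filter.eventually_ge_atTop 1] with n h1 h2 h3
    have hn0' : (0:ℝ) < (n:ℝ) := by exact_mod_cast h3
    have hN0 : 0 < Fintype.card {T : Fin n → Fin n → Bool // IsTournament T} :=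
      Fintype.card_pos_iff.mpr ⟨⟨_, RTaux.exists_tournament⟩⟩
    have hNpos : (0:ℝ) < (Fintype.card {T : Fin n → Fin n → Bool // IsTournament T} : ℝ) := by
      exact_mod_cast hN0
    set N : ℝ := (Fintype.card {T : Fin n → Fin n → Bool // IsTournament T} : ℝ) with hNdef
    set good := (Finset.univ : Finset {T : Fin n → Fin n → Bool // IsTournament T}).filter
        (fun T => ∀ A : Finset (Fin n), δ * n ≤ (A.card : ℝ) →
          (1 / 4 - ε) * (A.card.choose 3 : ℝ) ≤
            (((A.powersetCard 3).filter (IsCyclicTriple T.1)).card : ℝ)) with hgood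
    set G := (Finset.univ : Finset {T : Fin n → Fin n → Bool // IsTournament T}).filter
        (fun T => RTaux.Zstat T.1 ≤ η^2 * (n:ℝ)^4) with hGdef
    set B := (Finset.univ : Finset {T : Fin n → Fin n → Bool // IsTournament T}).filter
        (fun T => ¬ (RTaux.Zstat T.1 ≤ η^2 * (n:ℝ)^4)) with hBdef
    have hGB : G.card + B.card = Fintype.card {T : Fin n → Fin n → Bool // IsTournament T} := by
      rw [hGdef, hBdef]
      rw [Finset.card_filter_add_card_filter_not]
      · exact Finset.card_univ
    have hGBR : (G.card : ℝ) + B.card = N := by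
      rw [hNdef]; exact_mod_cast congrArg (fun k : ℕ => (k:ℝ)) hGB
    have hMarkov : (B.card : ℝ) * (η^2 * (n:ℝ)^4) ≤ N * (n:ℝ)^3 := by
      have hZnn : ∀ T : {T : Fin n → Fin n → Bool // IsTournament T}, 0 ≤ RTaux.Zstat T.1 :=
        fun T => Finset.sum_nonneg fun p _ => sq_nonneg _
      calc (B.card : ℝ) * (η^2 * (n:ℝ)^4) = ∑ _T ∈ B, η^2 * (n:ℝ)^4 := by
            rw [Finset.sum_const, nsmul_eq_mul]
        _ ≤ ∑ T ∈ B, RTaux.Zstat T.1 := by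
            apply Finset.sum_le_sum
            intro T hT
            rw [hBdef, Finset.mem_filter] at hT
            exact le_of_lt (lt_of_not_ge hT.2)
        _ ≤ ∑ T : {T : Fin n → Fin n → Bool // IsTournament T}, RTaux.Zstat T.1 :=
            Finset.sum_le_sum_of_subset_of_nonneg (Finset.subset_univ B)
              (fun T _ _ => hZnn T)
        _ ≤ N * (n:ℝ)^3 := RTaux.exp_Z
    have hGsub : G ⊆ good := by
      intro T hT
      rw [hGdef, Finset.mem_filter] at hT
      rw [hgood, Finset.mem_filter]
      refine ⟨Finset.mem_univ _, ?_⟩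
      intro A hA
      apply RTaux.main_det T.2 ε δ hε hδ hδ1 _ h1 h2 A hA
      have := hT.2
      rw [hη] at this
      exact this
    have hGle : (G.card : ℝ) ≤ (good.card : ℝ) := by
      exact_mod_cast Finset.card_le_card hGsub
    have hBle : (B.card : ℝ) * (η^2 * (n:ℝ)) ≤ N := by
      have hn3 : (0:ℝ) < (n:ℝ)^3 := by positivity
      rw [← mul_le_mul_iff_of_pos_right hn3]
      calc (B.card : ℝ) * (η^2 * (n:ℝ)) * (n:ℝ)^3
          = (B.card : ℝ) * (η^2 * (n:ℝ)^4) := by ring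
        _ ≤ N * (n:ℝ)^3 := hMarkov
    rw [hratio]
    simp only
    rw [le_div_iff₀ hNpos]
    have e1 : (1 - 1/η^2 * (1/(n:ℝ))) * N = N - N / (η^2 * (n:ℝ)) := by
      field_simp
    rw [e1]
    have e2 : (B.card : ℝ) ≤ N / (η^2 * (n:ℝ)) := by
      rw [le_div_iff₀ (by positivity : (0:ℝ) < η^2 * (n:ℝ))]
      exact hBle
    linarith
  · -- upper bound by 1
    filter_upwards [Filter.eventually_ge_atTop 1] with n h3
    have hn0' : (0:ℝ) < (n:ℝ) := by exact_mod_cast h3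
    have hN0 : 0 < Fintype.card {T : Fin n → Fin n → Bool // IsTournament T} :=
      Fintype.card_pos_iff.mpr ⟨⟨_, RTaux.exists_tournament⟩⟩
    have hNpos : (0:ℝ) < (Fintype.card {T : Fin n → Fin n → Bool // IsTournament T} : ℝ) := by
      exact_mod_cast hN0
    rw [hratio]
    simp only
    rw [div_le_one hNpos]
    have : ((Finset.univ : Finset {T : Fin n → Fin n → Bool // IsTournament T}).filter
        (fun T => ∀ A : Finset (Fin n), δ * n ≤ (A.card : ℝ) →
          (1 / 4 - ε) * (A.card.choose 3 : ℝ) ≤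
            (((A.powersetCard 3).filter (IsCyclicTriple T.1)).card : ℝ))).card
        ≤ Fintype.card {T : Fin n → Fin n → Bool // IsTournament T} := by
      rw [← Finset.card_univ]
      exact Finset.card_le_card (Finset.filter_subset _ _)
    exact_mod_cast this
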